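/- Let n ≥ 4 and F ⊆ E(K_n). The set S_F of vertices of L(K_n) corresponding to F is a mutual-visibility set of L(K_n) if and only if the subgraph of K_n formed by the edges F contains no K_4. -/

import Mathlib

namespace MutualVisibility

open SimpleGraph

variable {V W : Type*}

/-- `x` and `y` are `X`-visible in `G`: there is a shortest `x,y`-path all of whose
internal vertices avoid `X`. -/
def Visible (G : SimpleGraph V) (X : Set V) (x y : V) : Prop :=
  ∃ p : G.Walk x y, p.length = G.dist x y ∧ ∀ v ∈ p.support, v ≠ x → v ≠ y → v ∉ X

/-- `X` is a mutual-visibility set: any two vertices of `X` are `X`-visible. -/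
def IsMutualVisSet (G : SimpleGraph V) (X : Set V) : Prop :=
  ∀ x ∈ X, ∀ y ∈ X, Visible G X x y

/-- outer mutual-visibility set -/
def IsOuterMutualVisSet (G : SimpleGraph V) (X : Set V) : Prop :=
  IsMutualVisSet G X ∧ ∀ x ∈ X, ∀ y ∉ X, Visible G X x y

/-- dual mutual-visibility set -/
def IsDualMutualVisSet (G : SimpleGraph V) (X : Set V) : Prop :=
  IsMutualVisSet G X ∧ ∀ x ∉ X, ∀ y ∉ X, Visible G X x y

/-- total mutual-visibility set -/
def IsTotalMutualVisSet (G : SimpleGraph V) (X : Set V) : Prop :=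
  ∀ x y : V, Visible G X x y

/-- mutual-visibility number μ(G) -/
noncomputable def mu (G : SimpleGraph V) : ℕ :=
  sSup {k | ∃ X : Set V, IsMutualVisSet G X ∧ X.ncard = k}

/-- outer mutual-visibility number μ_o(G) -/
noncomputable def muOuter (G : SimpleGraph V) : ℕ :=
  sSup {k | ∃ X : Set V, IsOuterMutualVisSet G X ∧ X.ncard = k}

/-- dual mutual-visibility number μ_d(G) -/
noncomputable def muDual (G : SimpleGraph V) : ℕ :=
  sSup {k | ∃ X : Set V, IsDualMutualVisSet G X ∧ X.ncard = k}

/-- total mutual-visibility number μ_t(G) -/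
noncomputable def muTotal (G : SimpleGraph V) : ℕ :=
  sSup {k | ∃ X : Set V, IsTotalMutualVisSet G X ∧ X.ncard = k}

/-- `H` contains a subgraph copy of `F`. -/
def ContainsCopy (F : SimpleGraph W) (H : SimpleGraph V) : Prop :=
  ∃ f : W → V, Function.Injective f ∧ ∀ a b, F.Adj a b → H.Adj (f a) (f b)

/-- The Turán number ex(n; F): max number of edges of an `n`-vertex graph with no copy of `F`. -/
noncomputable def exNum (n : ℕ) (F : SimpleGraph W) : ℕ :=
  sSup {k | ∃ H : SimpleGraph (Fin n), ¬ ContainsCopy F H ∧ H.edgeSet.ncard = k}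

/-- The direct (tensor/categorical) product of graphs. -/
def directProd (G : SimpleGraph V) (H : SimpleGraph W) : SimpleGraph (V × W) where
  Adj x y := G.Adj x.1 y.1 ∧ H.Adj x.2 y.2
  symm := ⟨fun _ _ h => ⟨h.1.symm, h.2.symm⟩⟩
  loopless := ⟨fun x h => G.loopless.irrefl x.1 h.1⟩

/-- The join `G + H` of two graphs. -/
def graphJoin (G : SimpleGraph V) (H : SimpleGraph W) : SimpleGraph (V ⊕ W) where
  Adj u v := match u, v with
    | Sum.inl a, Sum.inl b => G.Adj a b
    | Sum.inr a, Sum.inr b => H.Adj a b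
    | _, _ => True
  symm := ⟨fun u v => match u, v with
    | Sum.inl _, Sum.inl _ => fun h => G.symm.symm _ _ h
    | Sum.inr _, Sum.inr _ => fun h => H.symm.symm _ _ h
    | Sum.inl _, Sum.inr _ => fun _ => trivial
    | Sum.inr _, Sum.inl _ => fun _ => trivial⟩
  loopless := ⟨fun u => match u with
    | Sum.inl a => G.loopless.irrefl a
    | Sum.inr a => H.loopless.irrefl a⟩

/-- A big-μ graph: `G = (K_1 ∪ K_t) + H` for some `t ≥ 0` and some graph `H`. -/
def IsBigMu {V : Type} (G : SimpleGraph V) : Prop :=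
  ∃ (t : ℕ) (W : Type) (H : SimpleGraph W),
    Nonempty (G ≃g graphJoin ((⊤ : SimpleGraph (Fin 1)) ⊕g (⊤ : SimpleGraph (Fin t))) H)

/-- A cograph: a graph with no induced path on four vertices. -/
def IsCograph (G : SimpleGraph V) : Prop :=
  ¬ ∃ f : Fin 4 → V, Function.Injective f ∧
      ∀ a b, (pathGraph 4).Adj a b ↔ G.Adj (f a) (f b)

/-- The Petersen graph, realized as the Kneser graph K(5,2). -/
def petersen : SimpleGraph {s : Finset (Fin 5) // s.card = 2} where
  Adj a b := Disjoint a.1 b.1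
  symm := ⟨fun _ _ h => h.symm⟩
  loopless := by
    constructor
    rintro ⟨s, hs⟩ h
    rw [disjoint_self, Finset.bot_eq_empty] at h
    subst h
    simp at hs

/-! In `L(K_n)` two edges of `K_n` sharing an endpoint are equal or adjacent, so the only
pairs that need an internal vertex are disjoint edges `ab`, `cd`. These are at distance two,
and their common neighbours are exactly the four edges `ac`, `ad`, `bc`, `bd`. Hence `ab` and
`cd` are `S_F`-visible iff one of these four edges is missing from `F`, and all pairs of `S_F`
are visible iff no two disjoint edges of `F` span a `K_4` together with their cross edges. -/

section Visibility

variable {G : SimpleGraph V} {X : Set V} {x y m : V}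

lemma visible_self : Visible G X x x :=
  ⟨.nil, by simp, fun _ hv hvx _ => absurd (by simpa using hv) hvx⟩

lemma visible_of_adj (h : G.Adj x y) : Visible G X x y := by
  refine ⟨h.toWalk, by simp [dist_eq_one_iff_adj.mpr h], fun v hv hvx hvy => ?_⟩
  simp_all

lemma dist_eq_two_of_mem_commonNeighbors (hne : x ≠ y) (hxy : ¬G.Adj x y)
    (hm : m ∈ G.commonNeighbors x y) : G.dist x y = 2 := by
  rw [mem_commonNeighbors] at hm
  let p : G.Walk x y := .cons hm.1 (.cons hm.2.symm .nil)
  exact le_antisymm (dist_le p) (Reachable.one_lt_dist_of_ne_of_not_adj ⟨p⟩ hne hxy)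

lemma visible_iff_of_dist_eq_two (h : G.dist x y = 2) :
    Visible G X x y ↔ ∃ m ∈ G.commonNeighbors x y, m ∉ X := by
  constructor
  · rintro ⟨p, hp, hX⟩
    rw [h] at hp
    have hxm : G.Adj x (p.getVert 1) := by
      simpa using p.adj_getVert_succ (i := 0) (by omega)
    have hmy : G.Adj (p.getVert 1) y := by
      simpa [← hp] using p.adj_getVert_succ (i := 1) (by omega)
    exact ⟨p.getVert 1, G.mem_commonNeighbors.mpr ⟨hxm, hmy.symm⟩,
      hX _ (p.getVert_mem_support 1) hxm.ne' hmy.ne⟩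
  · rintro ⟨m, hm, hmX⟩
    rw [mem_commonNeighbors] at hm
    refine ⟨.cons hm.1 (.cons hm.2.symm .nil), by simp [h], fun v hv hvx hvy => ?_⟩
    simp only [Walk.support_cons, Walk.support_nil, List.mem_cons, List.not_mem_nil,
      or_false] at hv
    grind

end Visibility

lemma containsCopy_top_fin_four_iff {H : SimpleGraph V} :
    ContainsCopy (⊤ : SimpleGraph (Fin 4)) H ↔ ∃ a b c d, H.Adj a b ∧ H.Adj c d ∧
      H.Adj a c ∧ H.Adj a d ∧ H.Adj b c ∧ H.Adj b d := by
  constructor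
  · rintro ⟨f, hf, hadj⟩
    exact ⟨f 0, f 1, f 2, f 3, hadj 0 1 (by decide), hadj 2 3 (by decide),
      hadj 0 2 (by decide), hadj 0 3 (by decide), hadj 1 2 (by decide), hadj 1 3 (by decide)⟩
  · rintro ⟨a, b, c, d, hab, hcd, hac, had, hbc, hbd⟩
    refine ⟨![a, b, c, d], fun i j hij => ?_, fun i j hij => ?_⟩
    · fin_cases i <;> fin_cases j <;> simp_all [H.ne_of_adj]
    · fin_cases i <;> fin_cases j <;> simp_all [H.adj_comm]

section LineGraph

variable {G : SimpleGraph V}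

lemma visible_lineGraph_of_mem_of_mem {X : Set G.edgeSet} {x y : G.edgeSet} {v : V}
    (hx : v ∈ (x : Sym2 V)) (hy : v ∈ (y : Sym2 V)) : Visible G.lineGraph X x y := by
  by_cases hxy : x = y
  · exact hxy ▸ visible_self
  · exact visible_of_adj (lineGraph_adj_iff_exists.mpr ⟨hxy, v, hx, hy⟩)

lemma mem_commonNeighbors_lineGraph_iff {x y m : G.edgeSet}
    (hxy : ∀ v ∈ (x : Sym2 V), v ∉ (y : Sym2 V)) :
    m ∈ G.lineGraph.commonNeighbors x y ↔
      ∃ u ∈ (x : Sym2 V), ∃ v ∈ (y : Sym2 V), (m : Sym2 V) = s(u, v) := by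
  simp only [mem_commonNeighbors, lineGraph_adj_iff_exists]
  constructor
  · rintro ⟨⟨-, u, hux, hum⟩, -, v, hvy, hvm⟩
    have huv : u ≠ v := fun h => hxy u hux (h ▸ hvy)
    exact ⟨u, hux, v, hvy, (Sym2.mem_and_mem_iff huv).mp ⟨hum, hvm⟩⟩
  · rintro ⟨u, hux, v, hvy, hm⟩
    have hum : u ∈ (m : Sym2 V) := hm ▸ Sym2.mem_mk_left u v
    have hvm : v ∈ (m : Sym2 V) := hm ▸ Sym2.mem_mk_right u v
    exact ⟨⟨fun h => hxy v (h ▸ hvm) hvy, u, hux, hum⟩,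
      fun h => hxy u hux (h ▸ hum), v, hvy, hvm⟩

end LineGraph

section CompleteLineGraph

variable {x y : (⊤ : SimpleGraph V).edgeSet}

lemma dist_lineGraph_top_eq_two (hxy : ∀ v ∈ (x : Sym2 V), v ∉ (y : Sym2 V)) :
    (⊤ : SimpleGraph V).lineGraph.dist x y = 2 := by
  obtain ⟨u, hu⟩ : ∃ u, u ∈ (x : Sym2 V) := ⟨_, Sym2.out_fst_mem _⟩
  obtain ⟨v, hv⟩ : ∃ v, v ∈ (y : Sym2 V) := ⟨_, Sym2.out_fst_mem _⟩
  have huv : u ≠ v := fun h => hxy u hu (h ▸ hv)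
  refine dist_eq_two_of_mem_commonNeighbors (m := ⟨s(u, v), huv⟩)
    (fun h => hxy u hu (h ▸ hu)) (fun h => ?_)
    ((mem_commonNeighbors_lineGraph_iff hxy).mpr ⟨u, hu, v, hv, rfl⟩)
  obtain ⟨-, w, hwx, hwy⟩ := lineGraph_adj_iff_exists.mp h
  exact hxy w hwx hwy

lemma visible_lineGraph_top_iff {F : Set (Sym2 V)}
    (hxy : ∀ v ∈ (x : Sym2 V), v ∉ (y : Sym2 V)) :
    Visible (⊤ : SimpleGraph V).lineGraph {e | (e : Sym2 V) ∈ F} x y ↔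
      ∃ u ∈ (x : Sym2 V), ∃ v ∈ (y : Sym2 V), s(u, v) ∉ F := by
  rw [visible_iff_of_dist_eq_two (dist_lineGraph_top_eq_two hxy)]
  constructor
  · rintro ⟨m, hm, hmF⟩
    obtain ⟨u, hu, v, hv, hmuv⟩ := (mem_commonNeighbors_lineGraph_iff hxy).mp hm
    exact ⟨u, hu, v, hv, hmuv ▸ hmF⟩
  · rintro ⟨u, hu, v, hv, huvF⟩
    have huv : u ≠ v := fun h => hxy u hu (h ▸ hv)
    exact ⟨⟨s(u, v), huv⟩,
      (mem_commonNeighbors_lineGraph_iff hxy).mpr ⟨u, hu, v, hv, rfl⟩, huvF⟩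

end CompleteLineGraph

theorem mv_set_lineGraph_complete_iff_K4_free_general (n : ℕ)
    (F : Set (Sym2 (Fin n))) :
    IsMutualVisSet (⊤ : SimpleGraph (Fin n)).lineGraph
      {e : (⊤ : SimpleGraph (Fin n)).edgeSet | (e : Sym2 (Fin n)) ∈ F} ↔
    ¬ ContainsCopy (⊤ : SimpleGraph (Fin 4)) (SimpleGraph.fromEdgeSet F) := by
  simp only [containsCopy_top_fin_four_iff, fromEdgeSet_adj]
  constructor
  · rintro hMV ⟨a, b, c, d, hab, hcd, hac, had, hbc, hbd⟩
    have hdisj : ∀ v ∈ s(a, b), v ∉ s(c, d) := by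
      simp only [Sym2.mem_iff]
      grind
    obtain ⟨u, hu, v, hv, huvF⟩ := (visible_lineGraph_top_iff hdisj).mp
      (hMV ⟨s(a, b), hab.2⟩ hab.1 ⟨s(c, d), hcd.2⟩ hcd.1)
    simp only [Sym2.mem_iff] at hu hv
    rcases hu with rfl | rfl <;> rcases hv with rfl | rfl
    exacts [huvF hac.1, huvF had.1, huvF hbc.1, huvF hbd.1]
  · rintro hK4 ⟨x, hx⟩ hxF ⟨y, hy⟩ hyF
    by_cases hmeet : ∃ v, v ∈ x ∧ v ∈ y
    · obtain ⟨v, hvx, hvy⟩ := hmeet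
      exact visible_lineGraph_of_mem_of_mem hvx hvy
    push Not at hmeet
    refine (visible_lineGraph_top_iff hmeet).mpr ?_
    by_contra! hcross
    induction x using Sym2.ind with | _ a b => ?_
    induction y using Sym2.ind with | _ c d => ?_
    simp only [Sym2.mem_iff] at hmeet hcross
    exact hK4 ⟨a, b, c, d, ⟨hxF, hx⟩, ⟨hyF, hy⟩, by grind⟩

theorem mv_set_lineGraph_complete_iff_K4_free (n : ℕ) (hn : 4 ≤ n)
    (F : Set (Sym2 (Fin n))) (hF : F ⊆ (⊤ : SimpleGraph (Fin n)).edgeSet) :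
    IsMutualVisSet (⊤ : SimpleGraph (Fin n)).lineGraph
      {e : (⊤ : SimpleGraph (Fin n)).edgeSet | (e : Sym2 (Fin n)) ∈ F} ↔
    ¬ ContainsCopy (⊤ : SimpleGraph (Fin 4)) (SimpleGraph.fromEdgeSet F) :=
  mv_set_lineGraph_complete_iff_K4_free_general n F
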